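/- M_n converges uniformly in probability to M on Θ: sup_{θ ∈ Θ} |M_n(θ) − M(θ)| → 0 in probability as n → ∞. -/

import Mathlib

/-! For each fixed `θ` the strong law of large numbers gives `M_n(θ) → M(θ)` almost surely,
simultaneously for all `θ` in a countable dense subset of `[-K, K]`. Since the weights `γ_i` lie
in `[0, 1]`, `θ ↦ m_θ(y, γ)` is `(|y| + K)`-Lipschitz on `[-K, K]` (its derivative is `y - θ`
times a posterior weight in `[0, 1]`), so `M_n` is Lipschitz with the random constant
`n⁻¹ ∑ (|Y_i| + K)`, which converges almost surely, and `M` with constant `E(|Y| + K)`.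
Eventually equi-Lipschitz functions on a compact set that converge on a dense subset converge
uniformly, so the supremum tends to `0` almost surely, hence in probability. -/

open MeasureTheory ProbabilityTheory Filter Topology

/-- The `N(θ,1)` density `φ(y|θ)`. -/
noncomputable def npdf (y θ : ℝ) : ℝ :=
  Real.exp (-(y - θ) ^ 2 / 2) / Real.sqrt (2 * Real.pi)

/-- `m_θ(y,γ) = log((1−γ)φ(y|0) + γφ(y|θ))`. -/
noncomputable def mFun (θ : ℝ) (p : ℝ × ℝ) : ℝ :=
  Real.log ((1 - p.2) * npdf p.1 0 + p.2 * npdf p.1 θ)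

section UniformConvergence

variable {α : Type*} [PseudoMetricSpace α] [CompactSpace α]

theorem tendsto_iSup_abs_sub_of_dist_le_mul {D : Set α} (hD : Dense D)
    {f : ℕ → α → ℝ} {g : α → ℝ} {L : ℕ → ℝ} {c : ℝ}
    (hf : ∀ n x y, dist (f n x) (f n y) ≤ L n * dist x y)
    (hL : IsBoundedUnder (· ≤ ·) atTop L)
    (hg : ∀ x y, dist (g x) (g y) ≤ c * dist x y)
    (hfg : ∀ x ∈ D, Tendsto (f · x) atTop (𝓝 (g x))) :
    Tendsto (fun n => ⨆ x, |f n x - g x|) atTop (𝓝 0) := by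
  obtain ⟨C, hC⟩ := hL
  refine Metric.tendsto_nhds.2 fun ε hε => ?_
  set δ := ε / (2 * (|C| + |c| + 1))
  have hδ : 0 < δ := by positivity
  have hδε : (|C| + |c|) * δ < ε / 2 := by
    have : (|C| + |c| + 1) * δ = ε / 2 := by
      simp only [δ]; field_simp
    linarith
  obtain ⟨t, htD, ht, hcover⟩ := isCompact_univ.elim_finite_subcover_image
    (b := D) (c := fun d => Metric.ball d δ) (fun _ _ => Metric.isOpen_ball)
    fun x _ => by simpa [Metric.mem_ball] using hD.exists_dist_lt x hδ
  have hnet : ∀ᶠ n in atTop, ∀ d ∈ t, |f n d - g d| < ε / 2 :=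
    (eventually_all_finite ht).2 fun d hd =>
      (Metric.tendsto_nhds.1 (hfg d (htD hd)) _ (by positivity)).mono fun n hn => hn
  filter_upwards [hC, hnet] with n hLn hn
  have hsup : ⨆ x, |f n x - g x| ≤ ε / 2 + (|C| + |c|) * δ := by
    refine Real.iSup_le (fun x => ?_) (by positivity)
    obtain ⟨d, hdt, hxd⟩ := Set.mem_iUnion₂.1 (hcover (Set.mem_univ x))
    have hxd : dist x d ≤ δ := (Metric.mem_ball.1 hxd).le
    have hfx : dist (f n x) (f n d) ≤ |C| * δ :=
      (hf n x d).trans (mul_le_mul (hLn.trans (le_abs_self C)) hxd dist_nonneg (abs_nonneg C))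
    have hgx : dist (g d) (g x) ≤ |c| * δ :=
      (hg d x).trans
        (mul_le_mul (le_abs_self c) (dist_comm d x ▸ hxd) dist_nonneg (abs_nonneg c))
    rw [Real.dist_eq] at hfx hgx
    linarith [hn d hdt, abs_sub_le (f n x) (f n d) (g x), abs_sub_le (f n d) (g d) (g x)]
  rw [Real.dist_eq, sub_zero, abs_of_nonneg (Real.iSup_nonneg fun x => abs_nonneg _)]
  linarith

end UniformConvergence

theorem aemeasurable_iSup_of_dense {Ω α : Type*} [MeasurableSpace Ω] {P : Measure Ω}
    [TopologicalSpace α] {D : Set α} (hD : Dense D) (hDc : D.Countable) {F : α → Ω → ℝ}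
    (hF : ∀ᵐ ω ∂P, Continuous (F · ω)) (hFm : ∀ x, Measurable (F x)) :
    AEMeasurable (fun ω => ⨆ x, F x ω) P := by
  have := hDc.to_subtype
  refine ⟨fun ω => ⨆ d : D, F d ω, Measurable.iSup fun d => hFm d, ?_⟩
  filter_upwards [hF] with ω hω using (hD.ciSup' hω).symm

theorem tendsto_measureReal_le_of_ae_tendsto_zero {Ω : Type*} [MeasurableSpace Ω]
    {P : Measure Ω} [IsFiniteMeasure P] {Y : ℕ → Ω → ℝ} (hY : ∀ n, AEMeasurable (Y n) P)
    (h : ∀ᵐ ω ∂P, Tendsto (Y · ω) atTop (𝓝 0)) {ε : ℝ} (hε : 0 < ε) :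
    Tendsto (fun n => P.real {ω | ε ≤ Y n ω}) atTop (𝓝 0) := by
  have hdist := tendstoInMeasure_iff_measureReal_dist.1
    (tendstoInMeasure_of_tendsto_ae (fun n => (hY n).aestronglyMeasurable) h) ε hε
  refine squeeze_zero (fun n => measureReal_nonneg)
    (fun n => measureReal_mono fun ω hω => ?_) hdist
  simp only [Set.mem_ofPred_eq, Real.dist_eq, sub_zero] at hω ⊢
  exact hω.trans (le_abs_self _)

theorem ae_tendsto_sum_comp_div_of_iIndepFun {Ω E : Type*} [MeasurableSpace Ω]
    [MeasurableSpace E] {P : Measure Ω} {ν : Measure E} {X : ℕ → Ω → E}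
    (hXm : ∀ i, Measurable (X i)) (hindep : iIndepFun X P) (hdist : ∀ i, P.map (X i) = ν)
    {g : E → ℝ} (hg : Measurable g) (hgi : Integrable g ν) :
    ∀ᵐ ω ∂P, Tendsto (fun n : ℕ => (∑ i ∈ Finset.range n, g (X i ω)) / n) atTop
      (𝓝 (∫ x, g x ∂ν)) := by
  have hident (i : ℕ) : IdentDistrib (g ∘ X i) (g ∘ X 0) P P :=
    IdentDistrib.comp
      ⟨(hXm i).aemeasurable, (hXm 0).aemeasurable, (hdist i).trans (hdist 0).symm⟩ hg
  have hint : Integrable (g ∘ X 0) P := by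
    rw [← hdist 0] at hgi
    exact hgi.comp_measurable (hXm 0)
  have hlaw := strong_law_ae_real (fun i => g ∘ X i) hint
    (fun i j hij => (hindep.indepFun hij).comp hg hg) hident
  rwa [← hdist 0, integral_map (hXm 0).aemeasurable hg.aestronglyMeasurable]

theorem ae_forall_snd_mem_of_map_eq_prod {Ω β γ : Type*} [MeasurableSpace Ω]
    [MeasurableSpace β] [MeasurableSpace γ] {P : Measure Ω} {μ : Measure β} {G : Measure γ}
    {X : ℕ → Ω → β × γ} (hXm : ∀ i, Measurable (X i))
    (hdist : ∀ i, P.map (X i) = μ.prod G) {s : Set γ} (hG : ∀ᵐ x ∂G, x ∈ s) :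
    ∀ᵐ ω ∂P, ∀ i, (X i ω).2 ∈ s :=
  ae_all_iff.2 fun i => ae_of_ae_map (hXm i).aemeasurable <| by
    rw [hdist i]; exact Measure.quasiMeasurePreserving_snd.ae hG

theorem abs_sum_div_sub_sum_div_le {a b l : ℕ → ℝ} {d : ℝ}
    (h : ∀ i, |a i - b i| ≤ l i * d) (n : ℕ) :
    |(∑ i ∈ Finset.range n, a i) / n - (∑ i ∈ Finset.range n, b i) / n|
      ≤ (∑ i ∈ Finset.range n, l i) / n * d := by
  rw [← sub_div, ← Finset.sum_sub_distrib, abs_div, Nat.abs_cast, div_mul_eq_mul_div,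
    Finset.sum_mul]
  gcongr
  exact (Finset.abs_sum_le_sum_abs _ _).trans (Finset.sum_le_sum fun i _ => h i)

section Model

lemma npdf_pos (y θ : ℝ) : 0 < npdf y θ := by
  unfold npdf; positivity

lemma npdf_le (y θ : ℝ) : npdf y θ ≤ (Real.sqrt (2 * Real.pi))⁻¹ := by
  rw [npdf, div_eq_mul_inv]
  exact mul_le_of_le_one_left (by positivity) (Real.exp_le_one_iff.2 (by nlinarith))

lemma exp_div_le_npdf {K θ : ℝ} (hθ : |θ| ≤ K) (y : ℝ) :
    Real.exp (-(|y| + K) ^ 2 / 2) / Real.sqrt (2 * Real.pi) ≤ npdf y θ := by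
  have hyθ : |y - θ| ≤ |y| + K := (abs_sub y θ).trans (by linarith)
  have hsq : (y - θ) ^ 2 ≤ (|y| + K) ^ 2 := by
    rw [← sq_abs]; exact pow_le_pow_left₀ (abs_nonneg _) hyθ 2
  unfold npdf
  gcongr

lemma hasDerivAt_npdf (y θ : ℝ) : HasDerivAt (npdf y) ((y - θ) * npdf y θ) θ := by
  have hexp : HasDerivAt (fun t => -(y - t) ^ 2 / 2) (y - θ) θ :=
    ((((hasDerivAt_id θ).const_sub y).pow 2).neg.div_const 2).congr_deriv (by simp)
  exact (hexp.exp.div_const _).congr_deriv (by rw [npdf]; ring)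

noncomputable def mixDensity (θ : ℝ) (p : ℝ × ℝ) : ℝ :=
  (1 - p.2) * npdf p.1 0 + p.2 * npdf p.1 θ

variable {p : ℝ × ℝ} (hp : p.2 ∈ Set.Icc (0 : ℝ) 1)
include hp

lemma exp_div_le_mixDensity (θ : ℝ) :
    Real.exp (-(|p.1| + |θ|) ^ 2 / 2) / Real.sqrt (2 * Real.pi) ≤ mixDensity θ p := by
  have h0 := exp_div_le_npdf (K := |θ|) (by rw [abs_zero]; exact abs_nonneg θ) p.1
  have hθ := exp_div_le_npdf (le_refl |θ|) p.1
  unfold mixDensity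
  nlinarith [mul_le_mul_of_nonneg_left h0 (sub_nonneg.2 hp.2),
    mul_le_mul_of_nonneg_left hθ hp.1]

lemma mixDensity_le (θ : ℝ) : mixDensity θ p ≤ (Real.sqrt (2 * Real.pi))⁻¹ := by
  unfold mixDensity
  nlinarith [mul_le_mul_of_nonneg_left (npdf_le p.1 0) (sub_nonneg.2 hp.2),
    mul_le_mul_of_nonneg_left (npdf_le p.1 θ) hp.1]

lemma mixDensity_pos (θ : ℝ) : 0 < mixDensity θ p :=
  lt_of_lt_of_le (by positivity) (exp_div_le_mixDensity hp θ)

lemma abs_mFun_le (θ : ℝ) :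
    |mFun θ p| ≤ Real.log (Real.sqrt (2 * Real.pi)) + (|p.1| + |θ|) ^ 2 / 2 := by
  have hlow := Real.log_le_log (by positivity) (exp_div_le_mixDensity hp θ)
  have hhigh := Real.log_le_log (mixDensity_pos hp θ) (mixDensity_le hp θ)
  rw [Real.log_div (Real.exp_ne_zero _) (by positivity), Real.log_exp] at hlow
  rw [Real.log_inv] at hhigh
  have : 0 ≤ Real.log (Real.sqrt (2 * Real.pi)) :=
    Real.log_nonneg (Real.one_le_sqrt.2 (by nlinarith [Real.pi_gt_three]))
  change |Real.log (mixDensity θ p)| ≤ _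
  rw [abs_le]
  constructor <;> nlinarith [sq_nonneg (|p.1| + |θ|)]

lemma hasDerivAt_mFun (θ : ℝ) :
    HasDerivAt (mFun · p) ((p.1 - θ) * (p.2 * npdf p.1 θ / mixDensity θ p)) θ := by
  have hmix : HasDerivAt (mixDensity · p) (p.2 * ((p.1 - θ) * npdf p.1 θ)) θ :=
    ((hasDerivAt_npdf p.1 θ).const_mul p.2).const_add _
  exact (hmix.log (mixDensity_pos hp θ).ne').congr_deriv (by ring)

lemma abs_mFun_sub_le {K θ θ' : ℝ} (hθ : θ ∈ Set.Icc (-K) K)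
    (hθ' : θ' ∈ Set.Icc (-K) K) : |mFun θ p - mFun θ' p| ≤ (|p.1| + K) * |θ - θ'| := by
  have hderiv (t : ℝ) (ht : t ∈ Set.Icc (-K) K) :
      ‖(p.1 - t) * (p.2 * npdf p.1 t / mixDensity t p)‖ ≤ |p.1| + K := by
    have hpos := mixDensity_pos hp t
    have hweight : p.2 * npdf p.1 t ≤ mixDensity t p := by
      have := npdf_pos p.1 0
      unfold mixDensity; nlinarith [hp.2]
    have hw0 : 0 ≤ p.2 * npdf p.1 t / mixDensity t p :=
      div_nonneg (mul_nonneg hp.1 (npdf_pos p.1 t).le) hpos.le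
    rw [Real.norm_eq_abs, abs_mul, abs_of_nonneg hw0]
    calc |p.1 - t| * (p.2 * npdf p.1 t / mixDensity t p) ≤ |p.1 - t| :=
          mul_le_of_le_one_right (abs_nonneg _) ((div_le_one hpos).2 hweight)
      _ ≤ |p.1| + K := (abs_sub p.1 t).trans (add_le_add_right (abs_le.2 ht) _)
  simpa only [Real.norm_eq_abs] using
    (convex_Icc (-K) K).norm_image_sub_le_of_norm_hasDerivWithin_le
      (fun t _ => (hasDerivAt_mFun hp t).hasDerivWithinAt) hderiv hθ' hθ

end Model

@[fun_prop]
lemma measurable_mFun (θ : ℝ) : Measurable (mFun θ) := by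
  unfold mFun npdf; fun_prop

lemma memLp_abs_add_const_gaussianReal (a : ℝ) :
    MemLp (fun y : ℝ => |y| + a) 2 (gaussianReal 0 1) :=
  (memLp_id_gaussianReal 2).abs.add (memLp_const a)

section NullLaw

variable {G : Measure ℝ} [IsFiniteMeasure G]

lemma integrable_abs_fst_add_const (a : ℝ) :
    Integrable (fun p : ℝ × ℝ => |p.1| + a) ((gaussianReal 0 1).prod G) :=
  ((memLp_abs_add_const_gaussianReal a).integrable one_le_two).comp_fst G

variable (hG : ∀ᵐ x ∂G, x ∈ Set.Icc (0 : ℝ) 1)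
include hG

lemma integrable_mFun (θ : ℝ) : Integrable (mFun θ) ((gaussianReal 0 1).prod G) := by
  have henv := ((integrable_const (μ := gaussianReal 0 1)
    (Real.log (Real.sqrt (2 * Real.pi)))).add
      ((memLp_abs_add_const_gaussianReal |θ|).integrable_sq.div_const 2)).comp_fst G
  refine henv.mono' (measurable_mFun θ).aestronglyMeasurable ?_
  filter_upwards [Measure.quasiMeasurePreserving_snd.ae hG] with p hp
  exact abs_mFun_le hp θ

lemma abs_integral_mFun_sub_le {K θ θ' : ℝ} (hθ : θ ∈ Set.Icc (-K) K)
    (hθ' : θ' ∈ Set.Icc (-K) K) :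
    |∫ p, mFun θ p ∂(gaussianReal 0 1).prod G - ∫ p, mFun θ' p ∂(gaussianReal 0 1).prod G|
      ≤ (∫ p, (|p.1| + K) ∂(gaussianReal 0 1).prod G) * |θ - θ'| := by
  rw [← integral_sub (integrable_mFun hG θ) (integrable_mFun hG θ'), ← integral_mul_const,
    ← Real.norm_eq_abs]
  refine norm_integral_le_of_norm_le ((integrable_abs_fst_add_const (G := G) K).mul_const _) ?_
  filter_upwards [Measure.quasiMeasurePreserving_snd.ae hG] with p hp
  exact abs_mFun_sub_le hp hθ hθ'

end NullLaw

theorem stmt14_general {Ω : Type*} [MeasurableSpace Ω] (P : Measure Ω) [IsProbabilityMeasure P]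
    (G : Measure ℝ) [IsProbabilityMeasure G]
    (hG : ∀ᵐ x ∂G, x ∈ Set.Icc (0 : ℝ) 1)
    (X : ℕ → Ω → ℝ × ℝ) (hXm : ∀ i, Measurable (X i))
    (hindep : iIndepFun X P)
    (hdist : ∀ i, Measure.map (X i) P = (gaussianReal 0 1).prod G)
    (K : ℝ)
    (Mn : ℕ → ℝ → Ω → ℝ)
    (hMn : ∀ n θ ω, Mn n θ ω = (∑ i ∈ Finset.range n, mFun θ (X i ω)) / n)
    (M : ℝ → ℝ) (hM : ∀ θ, M θ = ∫ p, mFun θ p ∂((gaussianReal 0 1).prod G)) :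
    ∀ ε > 0,
      Tendsto
        (fun n : ℕ =>
          (P {ω | ε ≤ ⨆ θ : Set.Icc (-K) K, |Mn n θ ω - M θ|}).toReal)
        atTop (nhds 0) := by
  have hγ := ae_forall_snd_mem_of_map_eq_prod hXm hdist hG
  set Lip : ℕ → Ω → ℝ := fun n ω => (∑ i ∈ Finset.range n, (|(X i ω).1| + K)) / n
  have hMn_lip (ω : Ω) (hω : ∀ i, (X i ω).2 ∈ Set.Icc (0 : ℝ) 1) (n : ℕ)
      (θ θ' : Set.Icc (-K) K) : dist (Mn n θ ω) (Mn n θ' ω) ≤ Lip n ω * dist θ θ' := by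
    rw [hMn, hMn, Real.dist_eq, Subtype.dist_eq, Real.dist_eq]
    exact abs_sum_div_sub_sum_div_le (fun i => abs_mFun_sub_le (hω i) θ.2 θ'.2) n
  have hM_lip (θ θ' : Set.Icc (-K) K) : dist (M θ) (M θ') ≤
      (∫ p, (|p.1| + K) ∂(gaussianReal 0 1).prod G) * dist θ θ' := by
    rw [hM, hM, Real.dist_eq, Subtype.dist_eq, Real.dist_eq]
    exact abs_integral_mFun_sub_le hG θ.2 θ'.2
  obtain ⟨D, hDc, hD⟩ := TopologicalSpace.exists_countable_dense (Set.Icc (-K) K)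
  have hlaw_D : ∀ᵐ ω ∂P, ∀ θ ∈ D, Tendsto (Mn · θ ω) atTop (𝓝 (M θ)) :=
    (ae_ball_iff hDc).2 fun θ _ => by
      simpa only [hMn, hM] using ae_tendsto_sum_comp_div_of_iIndepFun hXm hindep hdist
        (measurable_mFun θ) (integrable_mFun hG θ)
  have hlaw_lip := ae_tendsto_sum_comp_div_of_iIndepFun hXm hindep hdist
    (by fun_prop) (integrable_abs_fst_add_const (G := G) K)
  set S : ℕ → Ω → ℝ := fun n ω => ⨆ θ : Set.Icc (-K) K, |Mn n θ ω - M θ|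
  have hS : ∀ᵐ ω ∂P, Tendsto (S · ω) atTop (𝓝 0) := by
    filter_upwards [hγ, hlaw_D, hlaw_lip] with ω hω hDω hlipω
    exact tendsto_iSup_abs_sub_of_dist_le_mul hD (hMn_lip ω hω) hlipω.isBoundedUnder_le
      hM_lip hDω
  have hS_meas (n : ℕ) : AEMeasurable (S n) P := by
    refine aemeasurable_iSup_of_dense hD hDc (hγ.mono fun ω hω => ?_) fun θ => ?_
    · exact ((LipschitzWith.of_dist_le' (hMn_lip ω hω n)).continuous.sub
        (LipschitzWith.of_dist_le' hM_lip).continuous).abs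
    · simp only [hMn]
      fun_prop
  exact fun ε hε => tendsto_measureReal_le_of_ae_tendsto_zero hS_meas hS hε

/-- Under the null model, `M_n(θ) = n⁻¹ Σ_{i=1}^n m_θ(Y_i,γ_i)` converges uniformly in
probability to `M(θ) = E[m_θ(Y₁,γ₁)]` over `Θ = [−K,K]`:
`sup_{θ∈Θ} |M_n(θ) − M(θ)| → 0` in probability. -/
theorem stmt14 {Ω : Type*} [MeasurableSpace Ω] (P : Measure Ω) [IsProbabilityMeasure P]
    (G : Measure ℝ) [IsProbabilityMeasure G]
    (hG : ∀ᵐ x ∂G, x ∈ Set.Icc (0 : ℝ) 1)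
    (hVar : 0 < (∫ x, x ^ 2 ∂G) - (∫ x, x ∂G) ^ 2)
    (hlog : Integrable (fun x => -Real.log (1 - x)) G)
    (X : ℕ → Ω → ℝ × ℝ) (hXm : ∀ i, Measurable (X i))
    (hindep : iIndepFun X P)
    (hdist : ∀ i, Measure.map (X i) P = (gaussianReal 0 1).prod G)
    (K : ℝ) (hK : 0 < K)
    (Mn : ℕ → ℝ → Ω → ℝ)
    (hMn : ∀ n θ ω, Mn n θ ω = (∑ i ∈ Finset.range n, mFun θ (X i ω)) / n)
    (M : ℝ → ℝ) (hM : ∀ θ, M θ = ∫ p, mFun θ p ∂((gaussianReal 0 1).prod G)) :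
    ∀ ε > 0,
      Tendsto
        (fun n : ℕ =>
          (P {ω | ε ≤ ⨆ θ : Set.Icc (-K) K, |Mn n θ ω - M θ|}).toReal)
        atTop (nhds 0) :=
  stmt14_general P G hG X hXm hindep hdist K Mn hMn M hM
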